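/- Let A, B ⊂ 𝕊 be two finite sets. There exists an element c ∈ 𝕊 such that c ⊖ a > 𝟘 and b ⊖ c > 𝟘 for all a ∈ A and b ∈ B if and only if b ⊖ a > 𝟘 for all pairs (a,b) ∈ A × B; moreover, in that case c can be chosen to be a signed element (c ∈ 𝕋±). -/

import Mathlib

/-!  Signed tropical numbers 𝕋±, the symmetrized tropical semiring 𝕊,
     and signed tropical convexity (Loho–Végh). -/

inductive SSign : Type where
  | pos : SSign
  | neg : SSign
  | bal : SSign
deriving DecidableEq

/-- The symmetrized tropical semiring 𝕊: the tropical zero 𝟘 = -∞ together with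
elements `elem s r` where `s` is a sign (⊕, ⊖ or •) and `r` a real number. -/
inductive STrop : Type where
  | zero : STrop
  | elem : SSign → ℝ → STrop

namespace STrop

/-- membership in the signed tropical numbers 𝕋± (i.e. not balanced-nonzero). -/
def isSigned : STrop → Prop
  | elem SSign.bal _ => False
  | _ => True

/-- membership in 𝕋≥, the nonnegative tropical numbers. -/
def nneg : STrop → Prop
  | zero => True
  | elem SSign.pos _ => True
  | _ => False

/-- membership in 𝕋≤, the nonpositive tropical numbers. -/
def npos : STrop → Prop
  | zero => True
  | elem SSign.neg _ => True
  | _ => False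

/-- strictly positive signed element (sign ⊕, not 𝟘). -/
def isPos : STrop → Prop
  | elem SSign.pos _ => True
  | _ => False

/-- balanced or 𝟘 (membership in 𝕋•). -/
def balZero : STrop → Prop
  | zero => True
  | elem SSign.bal _ => True
  | _ => False

/-- the negation map ⊖. -/
def neg : STrop → STrop
  | zero => zero
  | elem SSign.pos r => elem SSign.neg r
  | elem SSign.neg r => elem SSign.pos r
  | elem SSign.bal r => elem SSign.bal r

/-- tropical addition ⊕ on 𝕊. -/
noncomputable def add : STrop → STrop → STrop
  | zero, y => y
  | x, zero => x
  | elem s r, elem t u =>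
    if r < u then elem t u
    else if u < r then elem s r
    else if s = t then elem s r
    else elem SSign.bal r

def signMul : SSign → SSign → SSign
  | SSign.pos, t => t
  | SSign.neg, SSign.pos => SSign.neg
  | SSign.neg, SSign.neg => SSign.pos
  | SSign.neg, SSign.bal => SSign.bal
  | SSign.bal, _ => SSign.bal

/-- tropical multiplication ⊙ on 𝕊. -/
def mul : STrop → STrop → STrop
  | zero, _ => zero
  | _, zero => zero
  | elem s r, elem t u => elem (signMul s t) (r + u)

/-- a ⊖ b := a ⊕ (⊖b). -/
noncomputable def sub (x y : STrop) : STrop := add x (neg y)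

/-- the tropical one, the signed element ⊕0. -/
def one : STrop := elem SSign.pos 0

/-- the absolute value |·| : 𝕊 → 𝕋≥. -/
def absS : STrop → STrop
  | zero => zero
  | elem _ r => elem SSign.pos r

/-- strict order: x > y iff x ⊖ y is a strictly positive signed element. -/
def sgt (x y : STrop) : Prop := isPos (sub x y)

/-- balance relation: x ⋈ y iff x ⊖ y is balanced or 𝟘. -/
def bal (x y : STrop) : Prop := balZero (sub x y)

/-- the relation ⊵ : x ⊵ y iff x > y or x ⋈ y. -/
def teq (x y : STrop) : Prop := sgt x y ∨ bal x y

/-- the total order ≤ on the signed tropical numbers 𝕋±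
(arbitrarily `False` whenever a balanced element is involved). -/
def sle : STrop → STrop → Prop
  | zero, zero => True
  | zero, elem SSign.pos _ => True
  | elem SSign.neg _, zero => True
  | elem SSign.neg _, elem SSign.pos _ => True
  | elem SSign.pos r, elem SSign.pos u => r ≤ u
  | elem SSign.neg r, elem SSign.neg u => u ≤ r
  | _, _ => False

/-- U(a): the set of signed numbers incomparable with a; the singleton {a}
for signed a, and the order interval [⊖|a|, |a|] for balanced a. -/
def U : STrop → Set STrop
  | elem SSign.bal r => {x | isSigned x ∧ sle (elem SSign.neg r) x ∧ sle x (elem SSign.pos r)}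
  | a => {a}

/-- tropical sum of finitely many elements of 𝕊. -/
noncomputable def sumFin : ∀ {n : ℕ}, (Fin n → STrop) → STrop
  | 0, _ => zero
  | _ + 1, f => add (f 0) (sumFin fun i => f i.succ)

/-- matrix–vector product A ⊙ x over 𝕊. -/
noncomputable def mv {d n : ℕ} (A : Fin d → Fin n → STrop) (x : Fin n → STrop) : Fin d → STrop :=
  fun i => sumFin fun j => mul (A i j) (x j)

/-- vectors in 𝕋±^d. -/
def isSignedVec {d : ℕ} (v : Fin d → STrop) : Prop := ∀ i, isSigned (v i)

/-- the signed tropical convex hull of the columns of a matrix A: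
tconv(A) = {z ∈ 𝕋±^d : z ⋈ A⊙x for some x ∈ 𝕋≥^n with ⊕_j x_j = 0}. -/
def tconv {d n : ℕ} (A : Fin d → Fin n → STrop) : Set (Fin d → STrop) :=
  {z | isSignedVec z ∧ ∃ x : Fin n → STrop,
    (∀ j, nneg (x j)) ∧ sumFin x = one ∧ ∀ i, bal (z i) (mv A x i)}

/-- the signed tropical convex hull of an arbitrary set: the union of the hulls
of all finite collections of points of M. -/
def tconvSet {d : ℕ} (M : Set (Fin d → STrop)) : Set (Fin d → STrop) :=
  ⋃ (n : ℕ) (A : Fin d → Fin n → STrop) (_ : ∀ j, (fun i => A i j) ∈ M), tconv A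

/-- a set M ⊆ 𝕋±^d is tropically convex iff M = tconv(M). -/
def TropConvex {d : ℕ} (M : Set (Fin d → STrop)) : Prop := M = tconvSet M

/-- evaluation a ⊙ (0, x₁, …, x_d)ᵀ of an affine functional. -/
noncomputable def affEval {d : ℕ} (a : Fin (d + 1) → STrop) (x : Fin d → STrop) : STrop :=
  sumFin fun j => mul (a j) ((Fin.cons one x : Fin (d + 1) → STrop) j)

/-- the open signed tropical halfspace H⁺(a) = {x ∈ 𝕋±^d : a⊙(0,x)ᵀ > 𝟘}. -/
def Hopen {d : ℕ} (a : Fin (d + 1) → STrop) : Set (Fin d → STrop) :=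
  {x | isSignedVec x ∧ sgt (affEval a x) zero}

/-- the closed signed tropical halfspace H̄⁺(a) = {x ∈ 𝕋±^d : a⊙(0,x)ᵀ ⊵ 𝟘}. -/
def Hclosed {d : ℕ} (a : Fin (d + 1) → STrop) : Set (Fin d → STrop) :=
  {x | isSignedVec x ∧ teq (affEval a x) zero}

/-- the non-negative kernel nnker(A). -/
def nnker {d n : ℕ} (A : Fin d → Fin n → STrop) : Set (Fin n → STrop) :=
  {x | (∀ j, nneg (x j)) ∧ x ≠ (fun _ => zero) ∧ ∀ i, balZero (mv A x i)}

/-- the open tropical cone sep(A) = {y ∈ 𝕋±^d : yᵀ⊙A > 𝟘 componentwise}. -/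
def sep {d : ℕ} {J : Type} (A : Fin d → J → STrop) : Set (Fin d → STrop) :=
  {y | isSignedVec y ∧ ∀ j, isPos (sumFin fun i => mul (y i) (A i j))}

end STrop

/-!
Under `r ↦ exp r` every element of 𝕊 becomes a closed real interval `[lowerEnd x, upperEnd x]`:
`𝟘`, `⊕r`, `⊖r` are the points `0`, `exp r`, `-exp r`, and the balanced `•r` is
`[-exp r, exp r]`. Then `b > a` says exactly that the interval of `a` lies strictly to the left
of that of `b`, so `>` is an interval order: it is transitive through any `c`, and if every
interval of `A` lies left of every interval of `B`, some real point lies strictly between them,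
and that point is the image of a signed element.
-/

namespace STrop

noncomputable def lowerEnd : STrop → ℝ
  | zero => 0
  | elem SSign.pos r => Real.exp r
  | elem SSign.neg r => -Real.exp r
  | elem SSign.bal r => -Real.exp r

noncomputable def upperEnd : STrop → ℝ
  | zero => 0
  | elem SSign.pos r => Real.exp r
  | elem SSign.neg r => -Real.exp r
  | elem SSign.bal r => Real.exp r

theorem lowerEnd_le_upperEnd (x : STrop) : lowerEnd x ≤ upperEnd x := by
  rcases x with _ | ⟨_ | _ | _, r⟩ <;> simp [lowerEnd, upperEnd, Real.exp_nonneg]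

theorem lowerEnd_eq_upperEnd {x : STrop} (hx : isSigned x) : lowerEnd x = upperEnd x := by
  rcases x with _ | ⟨_ | _ | _, r⟩ <;> simp_all [isSigned, lowerEnd, upperEnd]

theorem lowerEnd_neg (x : STrop) : lowerEnd (neg x) = -upperEnd x := by
  rcases x with _ | ⟨_ | _ | _, r⟩ <;> simp [neg, lowerEnd, upperEnd]

theorem isPos_iff_lowerEnd_pos (x : STrop) : isPos x ↔ 0 < lowerEnd x := by
  rcases x with _ | ⟨_ | _ | _, r⟩ <;> simp [isPos, lowerEnd, Real.exp_pos, Real.exp_nonneg]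

theorem isPos_add_iff (x y : STrop) : isPos (add x y) ↔ 0 < lowerEnd x + lowerEnd y := by
  rcases x with _ | ⟨s, r⟩
  · simp [add, lowerEnd, isPos_iff_lowerEnd_pos]
  rcases y with _ | ⟨t, u⟩
  · simp [add, lowerEnd, isPos_iff_lowerEnd_pos]
  have hexp := Real.exp_lt_exp (x := r) (y := u)
  have hexp' := Real.exp_lt_exp (x := u) (y := r)
  have hr := Real.exp_pos r
  have hu := Real.exp_pos u
  cases s <;> cases t <;> simp only [add, lowerEnd] <;> split_ifs <;>
    simp_all [isPos] <;> linarith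

theorem sgt_iff_upperEnd_lt_lowerEnd (b a : STrop) : sgt b a ↔ upperEnd a < lowerEnd b := by
  rw [sgt, sub, isPos_add_iff, lowerEnd_neg, ← sub_eq_add_neg, sub_pos]

theorem exists_isSigned_lowerEnd_eq (v : ℝ) : ∃ c : STrop, isSigned c ∧ lowerEnd c = v := by
  rcases lt_trichotomy v 0 with hv | rfl | hv
  · refine ⟨elem SSign.neg (Real.log (-v)), trivial, ?_⟩
    rw [lowerEnd, Real.exp_log (neg_pos.mpr hv), neg_neg]
  · exact ⟨zero, trivial, rfl⟩
  · exact ⟨elem SSign.pos (Real.log v), trivial, by rw [lowerEnd, Real.exp_log hv]⟩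

theorem sgt_trans {a b c : STrop} (hca : sgt c a) (hbc : sgt b c) : sgt b a := by
  rw [sgt_iff_upperEnd_lt_lowerEnd] at *
  calc upperEnd a < lowerEnd c := hca
    _ ≤ upperEnd c := lowerEnd_le_upperEnd c
    _ < lowerEnd b := hbc

theorem exists_isSigned_sgt_between (A B : Finset STrop) (H : ∀ a ∈ A, ∀ b ∈ B, sgt b a) :
    ∃ c, isSigned c ∧ (∀ a ∈ A, sgt c a) ∧ ∀ b ∈ B, sgt b c := by
  simp only [sgt_iff_upperEnd_lt_lowerEnd] at *
  obtain ⟨v, hA, hB⟩ :=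
    (A.image upperEnd).exists_between' (B.image lowerEnd) (by simpa using H)
  obtain ⟨c, hc, rfl⟩ := exists_isSigned_lowerEnd_eq v
  refine ⟨c, hc, by simpa using hA, ?_⟩
  simpa [← lowerEnd_eq_upperEnd hc] using hB

end STrop

/-- elimination for strict inequalities: a separating c exists iff
b ⊖ a > 𝟘 for all pairs, and then c can be chosen signed. -/
theorem elimination_strict (A B : Finset STrop) :
    ((∃ c : STrop, (∀ a ∈ A, STrop.sgt c a) ∧ (∀ b ∈ B, STrop.sgt b c)) ↔
      (∀ a ∈ A, ∀ b ∈ B, STrop.sgt b a)) ∧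
    ((∀ a ∈ A, ∀ b ∈ B, STrop.sgt b a) →
      ∃ c : STrop, STrop.isSigned c ∧ (∀ a ∈ A, STrop.sgt c a) ∧
        (∀ b ∈ B, STrop.sgt b c)) :=
  ⟨⟨fun ⟨_, hA, hB⟩ a ha b hb => STrop.sgt_trans (hA a ha) (hB b hb),
    fun H => (STrop.exists_isSigned_sgt_between A B H).imp fun _ hc => hc.2⟩,
    STrop.exists_isSigned_sgt_between A B⟩
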